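/- Let (A, ∘) be an anti-pre-Lie algebra and r = Σᵢ aᵢ⊗bᵢ ∈ A⊗A, with associated linear map T_r: A* → A defined by ⟨T_r(ζ), η⟩ = ⟨r, ζ⊗η⟩. Then r is a solution of the anti-pre-Lie Yang–Baxter equation S(r) = r₁₂∘r₂₃ + r₁₂∘r₁₃ - [r₁₃, r₂₃] = 0 if and only if [T_r(ζ), T_r(η)] = T_r(L_∘*(T_{τ(r)}(ζ))η + L_∘*(T_r(η))ζ) for all ζ, η ∈ A*, where [x,y] = x∘y - y∘x and L_∘*(x) is the negative dual of left multiplication L_∘(x). -/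

import Mathlib

/-!
Pairing the first two legs of `S(r)` with `η` and `ζ` leaves exactly the difference of the two
sides of the operator identity at `(ζ, η)`: the three summands of `S(r)` contract to
`T_r(L_∘*(T_r η) ζ)`, `T_r(L_∘*(T_{τ(r)} ζ) η)` and `[T_r η, T_r ζ]` (up to sign). Over a field
these contractions separate the points of `(A ⊗ A) ⊗ A`, since `ζ ↦ (ζ ⊗ id) t` recovers the
coordinates of `t` in a basis of the first factor.
-/

open scoped TensorProduct

/-- An anti-pre-Lie algebra structure on a vector space `A`. -/
def IsAntiPreLie {k A : Type*} [Field k] [AddCommGroup A] [Module k A]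
    (c : A →ₗ[k] A →ₗ[k] A) : Prop :=
  (∀ x y z, c x (c y z) - c y (c x z) = c (c y x - c x y) z) ∧
  (∀ x y z, c (c x y - c y x) z + c (c y z - c z y) x + c (c z x - c x z) y = 0)

/-- For `r = ∑ i, a i ⊗ b i ∈ A ⊗ A`, the associated map `T_r : A* → A`,
`⟨T_r ζ, η⟩ = ⟨r, ζ ⊗ η⟩`; concretely `T_r ζ = ∑ i, ζ (a i) • b i`. -/
def Tmap {k A ι : Type*} [Field k] [AddCommGroup A] [Module k A] [Fintype ι]
    (a b : ι → A) (ζ : Module.Dual k A) : A :=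
  ∑ i, ζ (a i) • b i

namespace Module.Dual

variable {R M M₁ M₂ N : Type*} [CommSemiring R] [AddCommMonoid M] [Module R M]
  [AddCommMonoid M₁] [Module R M₁] [AddCommMonoid M₂] [Module R M₂] [AddCommMonoid N] [Module R N]

variable (N) in
noncomputable def contractFst (ζ : Module.Dual R M) : M ⊗[R] N →ₗ[R] N :=
  TensorProduct.lid R N ∘ₗ ζ.rTensor N

@[simp]
lemma contractFst_tmul (ζ : Module.Dual R M) (x : M) (n : N) :
    ζ.contractFst N (x ⊗ₜ n) = ζ x • n := by
  simp [contractFst]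

lemma eq_zero_of_forall_contractFst_eq_zero [Module.Free R M] {t : M ⊗[R] N}
    (h : ∀ ζ : Module.Dual R M, ζ.contractFst N t = 0) : t = 0 := by
  let B := Module.Free.chooseBasis R M
  apply (TensorProduct.equivFinsuppOfBasisLeft B).injective
  ext i
  rw [TensorProduct.equivFinsuppOfBasisLeft_apply, map_zero, Finsupp.coe_zero, Pi.zero_apply]
  exact h (B.coord i)

variable (N) in
noncomputable def contractFstSnd (ζ : Module.Dual R M₁) (η : Module.Dual R M₂) :
    (M₁ ⊗[R] M₂) ⊗[R] N →ₗ[R] N :=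
  η.contractFst N ∘ₗ ζ.contractFst (M₂ ⊗[R] N) ∘ₗ (TensorProduct.assoc R M₁ M₂ N).toLinearMap

lemma contractFstSnd_tmul (ζ : Module.Dual R M₁) (η : Module.Dual R M₂) (x : M₁) (y : M₂)
    (n : N) : contractFstSnd N ζ η (x ⊗ₜ y ⊗ₜ n) = ζ x • η y • n := by
  simp [contractFstSnd]

lemma forall_contractFstSnd_eq_zero_iff [Module.Free R M₁] [Module.Free R M₂]
    (t : (M₁ ⊗[R] M₂) ⊗[R] N) : (∀ ζ η, contractFstSnd N ζ η t = 0) ↔ t = 0 := by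
  refine ⟨fun h ↦ ?_, fun ht ζ η ↦ by rw [ht, map_zero]⟩
  apply (TensorProduct.assoc R M₁ M₂ N).injective
  rw [map_zero]
  exact eq_zero_of_forall_contractFst_eq_zero fun ζ ↦
    eq_zero_of_forall_contractFst_eq_zero fun η ↦ h ζ η

end Module.Dual

open Module.Dual

section YangBaxter

variable {k A ι : Type*} [Field k] [AddCommGroup A] [Module k A] [Fintype ι]

lemma Tmap_add (a b : ι → A) (ζ η : Module.Dual k A) :
    Tmap a b (ζ + η) = Tmap a b ζ + Tmap a b η := by
  simp only [Tmap, LinearMap.add_apply, add_smul, Finset.sum_add_distrib]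

lemma Tmap_neg (a b : ι → A) (ζ : Module.Dual k A) : Tmap a b (-ζ) = -Tmap a b ζ := by
  simp only [Tmap, LinearMap.neg_apply, neg_smul, Finset.sum_neg_distrib]

variable (c : A →ₗ[k] A →ₗ[k] A) (a b : ι → A)

/-- The paper's `S(r) = r₁₂∘r₂₃ + r₁₂∘r₁₃ - [r₁₃, r₂₃]` for `r = ∑ i, a i ⊗ b i`. -/
noncomputable def aplYangBaxter : (A ⊗[k] A) ⊗[k] A :=
  (∑ i, ∑ j, a i ⊗ₜ[k] (c (b i) (a j)) ⊗ₜ[k] b j) +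
    (∑ i, ∑ j, (c (a i) (a j)) ⊗ₜ[k] b i ⊗ₜ[k] b j) -
    (∑ i, ∑ j, a i ⊗ₜ[k] a j ⊗ₜ[k] (c (b i) (b j) - c (b j) (b i)))

variable (ζ η : Module.Dual k A)

lemma contractFstSnd_r₁₂_comp_r₂₃ :
    contractFstSnd A η ζ (∑ i, ∑ j, a i ⊗ₜ[k] (c (b i) (a j)) ⊗ₜ[k] b j) =
      Tmap a b ((c (Tmap a b η)).dualMap ζ) := by
  simp only [map_sum, contractFstSnd_tmul, smul_smul, Tmap, map_smul, LinearMap.dualMap_apply',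
    LinearMap.coe_comp, LinearMap.coe_sum, LinearMap.coe_smul, Function.comp_apply,
    Finset.sum_apply, Pi.smul_apply, smul_eq_mul, Finset.sum_smul]
  exact Finset.sum_comm

lemma contractFstSnd_r₁₂_comp_r₁₃ :
    contractFstSnd A η ζ (∑ i, ∑ j, (c (a i) (a j)) ⊗ₜ[k] b i ⊗ₜ[k] b j) =
      Tmap a b ((c (Tmap b a ζ)).dualMap η) := by
  simp only [map_sum, contractFstSnd_tmul, smul_smul, Tmap, map_smul, LinearMap.dualMap_apply',
    LinearMap.coe_comp, LinearMap.coe_sum, LinearMap.coe_smul, Function.comp_apply,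
    Finset.sum_apply, Pi.smul_apply, smul_eq_mul, Finset.sum_smul]
  rw [Finset.sum_comm]
  simp_rw [mul_comm]

lemma contractFstSnd_lie_r₁₃_r₂₃ :
    contractFstSnd A η ζ (∑ i, ∑ j, a i ⊗ₜ[k] a j ⊗ₜ[k] (c (b i) (b j) - c (b j) (b i))) =
      c (Tmap a b η) (Tmap a b ζ) - c (Tmap a b ζ) (Tmap a b η) := by
  simp only [map_sum, contractFstSnd_tmul, smul_sub, smul_smul, Finset.sum_sub_distrib, Tmap,
    map_smul, LinearMap.coe_sum, LinearMap.coe_smul, Finset.sum_apply, Pi.smul_apply,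
    Finset.smul_sum, sub_left_inj]
  rw [Finset.sum_comm (f := fun x y ↦ (ζ (a x) * η (a y)) • c (b y) (b x))]
  simp_rw [mul_comm]

lemma contractFstSnd_aplYangBaxter :
    contractFstSnd A η ζ (aplYangBaxter c a b) =
      c (Tmap a b ζ) (Tmap a b η) - c (Tmap a b η) (Tmap a b ζ) -
        Tmap a b (-((c (Tmap b a ζ)).dualMap η) + -((c (Tmap a b η)).dualMap ζ)) := by
  rw [aplYangBaxter, map_sub, map_add, contractFstSnd_r₁₂_comp_r₂₃, contractFstSnd_r₁₂_comp_r₁₃,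
    contractFstSnd_lie_r₁₃_r₂₃, Tmap_add, Tmap_neg, Tmap_neg]
  abel

end YangBaxter

theorem aplYBE_iff_operator_general {k A ι : Type*} [Field k] [AddCommGroup A] [Module k A]
    [Fintype ι] (c : A →ₗ[k] A →ₗ[k] A) (a b : ι → A) :
    ((∑ i, ∑ j, a i ⊗ₜ[k] (c (b i) (a j)) ⊗ₜ[k] b j) +
      (∑ i, ∑ j, (c (a i) (a j)) ⊗ₜ[k] b i ⊗ₜ[k] b j) -
      (∑ i, ∑ j, a i ⊗ₜ[k] a j ⊗ₜ[k] (c (b i) (b j) - c (b j) (b i))) = 0)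
    ↔ ∀ ζ η : Module.Dual k A,
      c (Tmap a b ζ) (Tmap a b η) - c (Tmap a b η) (Tmap a b ζ) =
        Tmap a b (-((c (Tmap b a ζ)).dualMap η) + -((c (Tmap a b η)).dualMap ζ)) := by
  change aplYangBaxter c a b = 0 ↔ _
  rw [← forall_contractFstSnd_eq_zero_iff, forall_comm]
  simp only [contractFstSnd_aplYangBaxter, sub_eq_zero]

/-- for `r = ∑ i, a i ⊗ b i` in an anti-pre-Lie algebra, `r` solves the
anti-pre-Lie Yang–Baxter equation `S(r) = r₁₂∘r₂₃ + r₁₂∘r₁₃ - [r₁₃,r₂₃] = 0` iff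
`[T_r(ζ), T_r(η)] = T_r(L_∘*(T_{τ(r)}(ζ))η + L_∘*(T_r(η))ζ)` for all `ζ, η ∈ A*`,
where `L_∘*(x)ζ = -(ζ ∘ L_∘(x))`. -/
theorem aplYBE_iff_operator {k A ι : Type*} [Field k] [AddCommGroup A] [Module k A]
    [Fintype ι] (c : A →ₗ[k] A →ₗ[k] A) (h : IsAntiPreLie c) (a b : ι → A) :
    ((∑ i, ∑ j, a i ⊗ₜ[k] (c (b i) (a j)) ⊗ₜ[k] b j) +
      (∑ i, ∑ j, (c (a i) (a j)) ⊗ₜ[k] b i ⊗ₜ[k] b j) -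
      (∑ i, ∑ j, a i ⊗ₜ[k] a j ⊗ₜ[k] (c (b i) (b j) - c (b j) (b i))) = 0)
    ↔ ∀ ζ η : Module.Dual k A,
      c (Tmap a b ζ) (Tmap a b η) - c (Tmap a b η) (Tmap a b ζ) =
        Tmap a b (-((c (Tmap b a ζ)).dualMap η) + -((c (Tmap a b η)).dualMap ζ)) :=
  aplYBE_iff_operator_general c a b
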